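/- arXiv:2410.00850 — 3 statements merged into one kernel-verified Lean document; each statement's English description precedes it below -/
import Mathlib

section
/- Consider the function h⋆(x,ξ) := (1/2)·x₁²/h₀(x,ξ) on ℝ⁴ \ {0}, with h₀ = (|x|²+|ξ|²)/2 and (x,ξ) = (x₁,x₂,ξ₁,ξ₂). Then h⋆ is positively homogeneous of degree 0, and the function a(x,ξ) := −x₁ξ₁ satisfies the Poisson bracket identity {h⋆, a} = ξ₁²x₁²/(2h₀²) + (x₁²/h₀)(1 − x₁²/(2h₀)) ≥ 2h⋆(1 − h⋆), which is strictly positive on each level set h⋆⁻¹(e₀) with e₀ ∈ (0,1). In particular a is an escape function for h⋆ at every e₀ ∈ (0,1). -/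
/-
`{h⋆, a} = dh⋆[-X_a]`, and `-X_a = (x₁, 0, -ξ₁, 0)` generates the hyperbolic flow
`(x₁, ξ₁) ↦ (eᵗx₁, e⁻ᵗξ₁)`. Differentiating the quotient `x₁²/(2h₀)` along it gives
`ξ₁²x₁²/(2h₀²) + 2h⋆(1 - h⋆)`, whose first term is nonnegative and whose second is positive
wherever `0 < h⋆ < 1`.
-/

noncomputable section

abbrev E4 := EuclideanSpace ℝ (Fin 4)

def Jmap (z : E4) : E4 := (WithLp.equiv 2 (Fin 4 → ℝ)).symm ![z 2, z 3, -z 0, -z 1]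

/-- Hamiltonian vector field `X_f = J∇f`. -/
def hamVF (f : E4 → ℝ) (z : E4) : E4 := Jmap (gradient f z)

/-- Poisson bracket `{f, g} = ∇_ξ f · ∇ₓ g − ∇ₓ f · ∇_ξ g = dg[X_f]`. -/
def pb (f g : E4 → ℝ) (z : E4) : ℝ := inner ℝ (gradient g z) (hamVF f z)

/-- `h₀(z) = |z|²/2`. -/
def h0 (z : E4) : ℝ := ‖z‖ ^ 2 / 2

/-- The model Hamiltonian `h⋆(x,ξ) = (1/2) x₁²/h₀(x,ξ)`, coordinates `(x₁,x₂,ξ₁,ξ₂)`. -/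
def hstar (z : E4) : ℝ := (1 / 2) * (z 0) ^ 2 / h0 z

/-- The escape function `a(x,ξ) = −x₁ξ₁`. -/
def aesc (z : E4) : ℝ := -(z 0 * z 2)

lemma EuclideanSpace.real_inner_eq_sum {ι : Type*} [Fintype ι] (u v : EuclideanSpace ℝ ι) :
    inner ℝ u v = ∑ i, u i * v i := by
  simp [PiLp.inner_apply, mul_comm]

lemma h0_pos {z : E4} (hz : z ≠ 0) : 0 < h0 z := by
  have : 0 < ‖z‖ := norm_pos_iff.mpr hz
  unfold h0; positivity

lemma h0_smul (c : ℝ) (z : E4) : h0 (c • z) = c ^ 2 * h0 z := by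
  simp only [h0, norm_smul, Real.norm_eq_abs, mul_pow, sq_abs]
  ring

lemma hstar_smul {c : ℝ} (hc : c ≠ 0) (z : E4) : hstar (c • z) = hstar z := by
  have hc2 : c ^ 2 ≠ 0 := pow_ne_zero 2 hc
  simp only [hstar, h0_smul, PiLp.smul_apply, smul_eq_mul, mul_pow]
  rw [mul_div_assoc, mul_div_mul_left _ _ hc2, ← mul_div_assoc]

lemma hasFDerivAt_h0 (z : E4) : HasFDerivAt h0 (innerSL ℝ z) z := by
  have h : HasFDerivAt (fun w : E4 => ‖w‖ ^ 2) _ z := (hasStrictFDerivAt_norm_sq z).hasFDerivAt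
  rw [show h0 = fun w : E4 => 1 / 2 * ‖w‖ ^ 2 from funext fun w => by rw [h0]; ring]
  refine (h.const_mul (1 / 2 : ℝ)).congr_fderiv ?_
  ext v; simp

lemma EuclideanSpace.hasFDerivAt_apply {ι : Type*} [Fintype ι] (i : ι) (z : EuclideanSpace ℝ ι) :
    HasFDerivAt (fun w : EuclideanSpace ℝ ι => w i) (EuclideanSpace.proj i : StrongDual ℝ _) z :=
  (EuclideanSpace.proj i : StrongDual ℝ _).hasFDerivAt

lemma fderiv_aesc_apply (z v : E4) : fderiv ℝ aesc z v = -(v 0 * z 2 + z 0 * v 2) := by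
  have h : HasFDerivAt aesc _ z := ((EuclideanSpace.hasFDerivAt_apply 0 z).mul (EuclideanSpace.hasFDerivAt_apply 2 z)).neg
  rw [h.fderiv]
  simp only [neg_apply, add_apply, smul_apply, PiLp.proj_apply, smul_eq_mul]
  ring

lemma fderiv_hstar_apply {z : E4} (hz : z ≠ 0) (v : E4) :
    fderiv ℝ hstar z v
      = (z 0 * v 0 * h0 z - (1 / 2) * z 0 ^ 2 * inner ℝ z v) / h0 z ^ 2 := by
  have hne : h0 z ≠ 0 := (h0_pos hz).ne'
  have hnum := ((EuclideanSpace.hasFDerivAt_apply 0 z).pow 2).const_mul (1 / 2 : ℝ)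
  have hinv := (hasDerivAt_inv hne).comp_hasFDerivAt z (hasFDerivAt_h0 z)
  have h : HasFDerivAt hstar _ z := hnum.mul hinv
  rw [h.fderiv]
  simp only [add_apply, smul_apply, coe_innerSL_apply, PiLp.proj_apply, smul_eq_mul,
    nsmul_eq_mul]
  field_simp
  ring

lemma pb_aesc (f : E4 → ℝ) (z : E4) : pb f aesc z = fderiv ℝ f z !₂[z 0, 0, -z 2, 0] := by
  rw [pb, inner_gradient_left, fderiv_aesc_apply, ← inner_gradient_left, EuclideanSpace.real_inner_eq_sum]
  simp only [Fin.sum_univ_four, hamVF, Jmap, WithLp.equiv_symm_apply, Matrix.cons_val]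
  ring

lemma pb_hstar_aesc {z : E4} (hz : z ≠ 0) :
    pb hstar aesc z
      = z 2 ^ 2 * z 0 ^ 2 / (2 * h0 z ^ 2) + (z 0 ^ 2 / h0 z) * (1 - z 0 ^ 2 / (2 * h0 z)) := by
  have hne : h0 z ≠ 0 := (h0_pos hz).ne'
  rw [pb_aesc, fderiv_hstar_apply hz, EuclideanSpace.real_inner_eq_sum]
  simp only [Fin.sum_univ_four, Matrix.cons_val]
  field_simp
  ring

lemma two_mul_hstar_mul_one_sub (z : E4) :
    2 * hstar z * (1 - hstar z) = (z 0 ^ 2 / h0 z) * (1 - z 0 ^ 2 / (2 * h0 z)) := by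
  rw [hstar]; ring

lemma two_mul_hstar_mul_one_sub_le_pb {z : E4} (hz : z ≠ 0) :
    2 * hstar z * (1 - hstar z) ≤ pb hstar aesc z := by
  rw [pb_hstar_aesc hz, two_mul_hstar_mul_one_sub, le_add_iff_nonneg_left]
  positivity

/-- **The model example.** `h⋆ = x₁²/(2h₀)` is positively homogeneous of degree 0, and
`a = −x₁ξ₁` (homogeneous of degree 2) satisfies
`{h⋆,a} = ξ₁²x₁²/(2h₀²) + (x₁²/h₀)(1 − x₁²/(2h₀)) ≥ 2h⋆(1 − h⋆)`,
which is strictly positive on every level set `h⋆⁻¹(e₀)`, `e₀ ∈ (0,1)`. Hence `a` is an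
escape function for `h⋆` at every `e₀ ∈ (0,1)`. -/
theorem hstar_escape_function :
    (∀ (lam : ℝ), 0 < lam → ∀ z : E4, z ≠ 0 → hstar (lam • z) = hstar z)
    ∧ (∀ z : E4, z ≠ 0 →
        pb hstar aesc z
          = (z 2) ^ 2 * (z 0) ^ 2 / (2 * (h0 z) ^ 2)
            + ((z 0) ^ 2 / h0 z) * (1 - (z 0) ^ 2 / (2 * h0 z)))
    ∧ (∀ z : E4, z ≠ 0 → 2 * hstar z * (1 - hstar z) ≤ pb hstar aesc z)
    ∧ (∀ e₀ : ℝ, e₀ ∈ Set.Ioo (0 : ℝ) 1 →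
        ∀ z : E4, z ≠ 0 → hstar z = e₀ → 0 < pb hstar aesc z) := by
  refine ⟨fun lam hlam z _ => hstar_smul hlam.ne' z, fun z hz => pb_hstar_aesc hz,
    fun z hz => two_mul_hstar_mul_one_sub_le_pb hz, ?_⟩
  rintro e₀ ⟨he₀_pos, he₀_lt_one⟩ z hz rfl
  calc 0 < 2 * hstar z * (1 - hstar z) := by have := sub_pos.2 he₀_lt_one; positivity
    _ ≤ pb hstar aesc z := two_mul_hstar_mul_one_sub_le_pb hz
end
end

section
/- Let h : ℝ⁴ \ {0} → ℝ be a smooth positively homogeneous function of degree 0, let e₀ be a regular value of h, and suppose a is an escape function for h at e₀, i.e. {h,a} ≥ δ > 0 on h⁻¹(e₀), with a positively homogeneous of degree 2. Then there exists an open interval I ∋ e₀, contained in the set of regular values of h in the range of h, such that {h,a} ≥ δ/2 on h⁻¹(ω) for every ω ∈ I. -/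
noncomputable section

lemma cont_coord (j : Fin 4) : Continuous fun z : E4 => z j :=
  (EuclideanSpace.proj j : E4 →L[ℝ] ℝ).continuous

lemma Jmap_continuous : Continuous Jmap := by
  unfold Jmap
  refine (PiLp.continuous_toLp (p := 2) (β := fun _ : Fin 4 => ℝ)).comp ?_
  refine continuous_pi ?_
  intro i
  fin_cases i <;> simp <;> first
    | exact cont_coord _
    | exact (cont_coord _).neg

lemma Jmap_smul (c : ℝ) (z : E4) : Jmap (c • z) = c • Jmap z := by
  unfold Jmap
  ext i
  fin_cases i <;> simp [WithLp.equiv_symm_apply, PiLp.toLp_apply] <;> ring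

-- differentiability of f at z ≠ 0 given ContDiffOn
lemma diffAt_of_cdo {f : E4 → ℝ} (hf : ContDiffOn ℝ (⊤ : ℕ∞) f {(0 : E4)}ᶜ)
    {z : E4} (hz : z ≠ 0) : DifferentiableAt ℝ f z := by
  have := (hf.differentiableOn (by simp)).differentiableAt
    ((isOpen_compl_singleton).mem_nhds hz)
  exact this

-- fderiv homogeneity: if f (lam • w) = c * f w for all w ≠ 0, then
-- lam • fderiv f (lam • z) = c • fderiv f z
lemma fderiv_homog {f : E4 → ℝ} (hf : ContDiffOn ℝ (⊤ : ℕ∞) f {(0 : E4)}ᶜ)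
    {lam c : ℝ} (hlam : 0 < lam)
    (hfh : ∀ w : E4, w ≠ 0 → f (lam • w) = c * f w)
    {z : E4} (hz : z ≠ 0) :
    lam • fderiv ℝ f (lam • z) = c • fderiv ℝ f z := by
  have hlz : lam • z ≠ 0 := smul_ne_zero (ne_of_gt hlam) hz
  have h1 : HasFDerivAt (fun w : E4 => f (lam • w))
      ((fderiv ℝ f (lam • z)).comp (lam • ContinuousLinearMap.id ℝ E4)) z := by
    exact (diffAt_of_cdo hf hlz).hasFDerivAt.comp z ((hasFDerivAt_id z).const_smul lam)
  have h2 : HasFDerivAt (fun w : E4 => c * f w) (c • fderiv ℝ f z) z :=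
    ((diffAt_of_cdo hf hz).hasFDerivAt).const_smul c
  have heq : (fun w : E4 => f (lam • w)) =ᶠ[nhds z] (fun w : E4 => c * f w) := by
    filter_upwards [(isOpen_compl_singleton).mem_nhds hz] with w hw
    exact hfh w hw
  have := (h1.congr_of_eventuallyEq heq.symm).unique h2
  rw [← this]
  ext v
  simp [ContinuousLinearMap.comp_apply, smul_comm]

lemma gradient_homog {f : E4 → ℝ} (hf : ContDiffOn ℝ (⊤ : ℕ∞) f {(0 : E4)}ᶜ)
    {lam c : ℝ} (hlam : 0 < lam)
    (hfh : ∀ w : E4, w ≠ 0 → f (lam • w) = c * f w)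
    {z : E4} (hz : z ≠ 0) :
    lam • gradient f (lam • z) = c • gradient f z := by
  have := fderiv_homog hf hlam hfh hz
  unfold gradient
  rw [← map_smul, ← map_smul, this]

lemma pb_cont : ∀ {h a : E4 → ℝ}, ContDiffOn ℝ (⊤ : ℕ∞) h {(0 : E4)}ᶜ →
    ContDiffOn ℝ (⊤ : ℕ∞) a {(0 : E4)}ᶜ → ContinuousOn (pb h a) {(0 : E4)}ᶜ := by
  intro h a hs has
  have gradcont : ∀ {f : E4 → ℝ}, ContDiffOn ℝ (⊤ : ℕ∞) f {(0 : E4)}ᶜ →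
      ContinuousOn (fun z => gradient f z) {(0 : E4)}ᶜ := by
    intro f hf
    have : ContinuousOn (fderiv ℝ f) {(0 : E4)}ᶜ := by
      have := hf.continuousOn_fderiv_of_isOpen isOpen_compl_singleton (by norm_num)
      exact this
    exact ((InnerProductSpace.toDual ℝ E4).symm.continuous.comp_continuousOn this)
  exact ((gradcont has).inner (𝕜 := ℝ) ((Jmap_continuous.comp_continuousOn (gradcont hs))))

lemma fderiv_cont {h : E4 → ℝ} (hs : ContDiffOn ℝ (⊤ : ℕ∞) h {(0 : E4)}ᶜ) :
    ContinuousOn (fderiv ℝ h) {(0 : E4)}ᶜ :=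
  hs.continuousOn_fderiv_of_isOpen isOpen_compl_singleton (by norm_num)

lemma pb_homog {h a : E4 → ℝ} (hs : ContDiffOn ℝ (⊤ : ℕ∞) h {(0 : E4)}ᶜ)
    (has : ContDiffOn ℝ (⊤ : ℕ∞) a {(0 : E4)}ᶜ)
    (hhom : ∀ (lam : ℝ), 0 < lam → ∀ z : E4, z ≠ 0 → h (lam • z) = h z)
    (hahom : ∀ (lam : ℝ), 0 < lam → ∀ z : E4, z ≠ 0 → a (lam • z) = lam ^ 2 • a z)
    {lam : ℝ} (hlam : 0 < lam) {z : E4} (hz : z ≠ 0) :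
    pb h a (lam • z) = pb h a z := by
  have hl0 : lam ≠ 0 := ne_of_gt hlam
  have g1 : gradient h (lam • z) = lam⁻¹ • gradient h z := by
    have := gradient_homog hs hlam (fun w hw => by rw [hhom lam hlam w hw, one_mul]) hz
    rw [one_smul] at this
    rw [← this, smul_smul, inv_mul_cancel₀ hl0, one_smul]
  have g2 : gradient a (lam • z) = lam • gradient a z := by
    have := gradient_homog has hlam
      (fun w hw => by rw [hahom lam hlam w hw, smul_eq_mul]) hz
    calc gradient a (lam • z) = lam⁻¹ • (lam • gradient a (lam • z)) := by
          rw [smul_smul, inv_mul_cancel₀ hl0, one_smul]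
      _ = lam⁻¹ • ((lam ^ 2) • gradient a z) := by rw [this]
      _ = lam • gradient a z := by rw [smul_smul, sq, ← mul_assoc, inv_mul_cancel₀ hl0, one_mul]
  unfold pb hamVF
  rw [g1, g2, Jmap_smul, real_inner_smul_left, real_inner_smul_right]
  field_simp

lemma fderiv_ne_homog {h : E4 → ℝ} (hs : ContDiffOn ℝ (⊤ : ℕ∞) h {(0 : E4)}ᶜ)
    (hhom : ∀ (lam : ℝ), 0 < lam → ∀ z : E4, z ≠ 0 → h (lam • z) = h z)
    {lam : ℝ} (hlam : 0 < lam) {z : E4} (hz : z ≠ 0)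
    (hne : fderiv ℝ h z ≠ 0) : fderiv ℝ h (lam • z) ≠ 0 := by
  have := fderiv_homog hs hlam (fun w hw => by rw [hhom lam hlam w hw, one_mul]) hz
  rw [one_smul] at this
  intro hcon
  rw [hcon, smul_zero] at this
  exact hne this.symm

lemma sphere_part {h a : E4 → ℝ}
    (hs : ContDiffOn ℝ (⊤ : ℕ∞) h {(0 : E4)}ᶜ) (has : ContDiffOn ℝ (⊤ : ℕ∞) a {(0 : E4)}ᶜ)
    (e₀ : ℝ)
    (hregular : ∀ z : E4, z ≠ 0 → h z = e₀ → fderiv ℝ h z ≠ 0)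
    {δ : ℝ} (hδ : 0 < δ)
    (hescape : ∀ z : E4, z ≠ 0 → h z = e₀ → δ ≤ pb h a z) :
    ∃ ε₁ > 0, ∀ w : E4, ‖w‖ = 1 → |h w - e₀| < ε₁ →
      (δ / 2 < pb h a w ∧ fderiv ℝ h w ≠ 0) := by
  set U : Set E4 := ({(0 : E4)}ᶜ ∩ (pb h a)⁻¹' (Set.Ioi (δ/2))) ∩
      ({(0 : E4)}ᶜ ∩ (fderiv ℝ h)⁻¹' {(0 : E4 →L[ℝ] ℝ)}ᶜ) with hUdef
  have hUopen : IsOpen U := by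
    refine IsOpen.inter ?_ ?_
    · exact (pb_cont hs has).isOpen_inter_preimage isOpen_compl_singleton isOpen_Ioi
    · exact (fderiv_cont hs).isOpen_inter_preimage isOpen_compl_singleton
        isOpen_compl_singleton
  have hUmem : ∀ w : E4, w ∈ U → δ / 2 < pb h a w ∧ fderiv ℝ h w ≠ 0 := by
    intro w hw
    exact ⟨hw.1.2, hw.2.2⟩
  set S : Set E4 := Metric.sphere (0 : E4) 1 with hSdef
  have hSne : ∀ w ∈ S, w ≠ 0 := by
    intro w hw
    have : ‖w‖ = 1 := mem_sphere_zero_iff_norm.mp hw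
    intro h0; rw [h0] at this; simp at this
  have hZU : ∀ w ∈ S, h w = e₀ → w ∈ U := by
    intro w hw hwe
    have hw0 := hSne w hw
    refine ⟨⟨hw0, ?_⟩, hw0, hregular w hw0 hwe⟩
    exact Set.mem_preimage.mpr (Set.mem_Ioi.mpr (lt_of_lt_of_le (by linarith) (hescape w hw0 hwe)))
  set C : Set E4 := S \ U with hCdef
  have hCcomp : IsCompact C := (isCompact_sphere 0 1).diff hUopen
  have hCsub : C ⊆ {(0 : E4)}ᶜ := fun w hw => hSne w hw.1
  by_cases hC : C.Nonempty
  · have hcont : ContinuousOn (fun w : E4 => |h w - e₀|) C :=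
      ((hs.continuousOn.mono hCsub).sub continuousOn_const).abs
    obtain ⟨w₀, hw₀C, hmin⟩ := hCcomp.exists_isMinOn hC hcont
    refine ⟨|h w₀ - e₀|, ?_, ?_⟩
    · rcases lt_or_eq_of_le (abs_nonneg (h w₀ - e₀)) with h1 | h1
      · exact h1
      · exfalso
        have : h w₀ = e₀ := by
          have := h1.symm
          rw [abs_eq_zero, sub_eq_zero] at this
          exact this
        exact hw₀C.2 (hZU w₀ hw₀C.1 this)
    · intro w hwn hlt
      by_contra hcon
      push_neg at hcon
      have hwS : w ∈ S := by simpa [hSdef] using hwn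
      have hwU : w ∉ U := by
        intro hwU
        rcases hUmem w hwU with ⟨h1, h2⟩
        exact h2 (hcon h1)
      have : w ∈ C := ⟨hwS, hwU⟩
      exact absurd hlt (not_lt.mpr (hmin this))
  · refine ⟨1, one_pos, ?_⟩
    intro w hwn _
    have hwS : w ∈ S := by simpa [hSdef] using hwn
    have : w ∈ U := by
      by_contra hcon
      exact hC ⟨w, hwS, hcon⟩
    exact hUmem w this

lemma ivt_part {h : E4 → ℝ}
    (hs : ContDiffOn ℝ (⊤ : ℕ∞) h {(0 : E4)}ᶜ)
    {e₀ : ℝ} {z₀ : E4} (hz₀ : z₀ ≠ 0) (hz₀e : h z₀ = e₀)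
    (hreg : fderiv ℝ h z₀ ≠ 0) :
    ∃ ε₂ > 0, ∀ ω ∈ Set.Ioo (e₀ - ε₂) (e₀ + ε₂), ∃ z : E4, z ≠ 0 ∧ h z = ω := by
  set v : E4 := gradient h z₀ with hvdef
  have hv0 : v ≠ 0 := by
    intro hv
    apply hreg
    have : (InnerProductSpace.toDual ℝ E4).symm (fderiv ℝ h z₀) = 0 := hv
    have := congrArg (InnerProductSpace.toDual ℝ E4) this
    simpa using this
  have hvnorm : 0 < ‖v‖ := norm_pos_iff.mpr hv0
  set T : ℝ := ‖z₀‖ / (2 * ‖v‖) with hTdef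
  have hT : 0 < T := div_pos (norm_pos_iff.mpr hz₀) (by positivity)
  set γ : ℝ → E4 := fun t => z₀ + t • v with hγdef
  have hγne : ∀ t : ℝ, |t| < T → γ t ≠ 0 := by
    intro t ht hcon
    have h1 : z₀ = -(t • v) := eq_neg_of_add_eq_zero_left hcon
    have h2 : ‖z₀‖ = |t| * ‖v‖ := by rw [h1, norm_neg, norm_smul, Real.norm_eq_abs]
    have h3 : |t| * ‖v‖ < ‖z₀‖ / 2 := by
      have h4 := mul_lt_mul_of_pos_right ht hvnorm
      rw [hTdef] at h4
      have h5 : ‖z₀‖ / (2 * ‖v‖) * ‖v‖ = ‖z₀‖ / 2 := by field_simp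
      rw [h5] at h4
      exact h4
    have h6 : 0 < ‖z₀‖ := norm_pos_iff.mpr hz₀
    linarith [h2 ▸ h3]
  set φ : ℝ → ℝ := fun t => h (γ t) with hφdef
  have hφ0 : φ 0 = e₀ := by simp [hφdef, hγdef, hz₀e]
  have hγder : HasDerivAt γ v 0 := by
    simpa [hγdef] using ((hasDerivAt_id (0:ℝ)).smul_const v).const_add z₀
  have hγ0 : γ 0 = z₀ := by simp [hγdef]
  have hder : HasDerivAt φ ((fderiv ℝ h z₀) v) 0 := by
    have hd : HasFDerivAt h (fderiv ℝ h z₀) (γ 0) := by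
      rw [hγ0]; exact (diffAt_of_cdo hs hz₀).hasFDerivAt
    exact hd.comp_hasDerivAt 0 hγder
  set c : ℝ := (fderiv ℝ h z₀) v with hcdef
  have hcpos : 0 < c := by
    have h1 : c = inner ℝ v v := by
      rw [hcdef, hvdef]
      rw [show gradient h z₀ = (InnerProductSpace.toDual ℝ E4).symm (fderiv ℝ h z₀) from rfl]
      rw [InnerProductSpace.toDual_symm_apply]
    rw [h1, real_inner_self_eq_norm_sq]
    positivity
  have hslope : Filter.Tendsto (slope φ 0) (nhdsWithin 0 {(0:ℝ)}ᶜ) (nhds c) :=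
    hasDerivAt_iff_tendsto_slope.mp hder
  have hev : ∀ᶠ t in nhdsWithin (0:ℝ) {(0:ℝ)}ᶜ, c/2 < slope φ 0 t :=
    hslope.eventually (lt_mem_nhds (by linarith))
  have hevT : ∀ᶠ t in nhdsWithin (0:ℝ) {(0:ℝ)}ᶜ, |t| < T := by
    apply eventually_nhdsWithin_of_eventually_nhds
    have := eventually_abs_sub_lt (0:ℝ) hT
    simpa using this
  -- positive side
  have hpos_le : nhdsWithin (0:ℝ) (Set.Ioi 0) ≤ nhdsWithin (0:ℝ) {(0:ℝ)}ᶜ :=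
    nhdsWithin_mono 0 (fun x hx => ne_of_gt hx)
  have hneg_le : nhdsWithin (0:ℝ) (Set.Iio 0) ≤ nhdsWithin (0:ℝ) {(0:ℝ)}ᶜ :=
    nhdsWithin_mono 0 (fun x hx => ne_of_lt hx)
  obtain ⟨tp, ⟨hsp, hTp⟩, htp⟩ :=
    ((((hev.and hevT).filter_mono hpos_le)).and self_mem_nhdsWithin).exists
  obtain ⟨tn, ⟨hsn, hTn⟩, htn⟩ :=
    ((((hev.and hevT).filter_mono hneg_le)).and self_mem_nhdsWithin).exists
  have htppos : (0:ℝ) < tp := htp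
  have htnneg : tn < (0:ℝ) := htn
  have hφp : e₀ < φ tp := by
    have : slope φ 0 tp = (φ tp - e₀) / tp := by rw [slope_def_field]; rw [hφ0]; ring
    rw [this] at hsp
    have := (lt_div_iff₀ htppos).mp hsp
    nlinarith
  have hφn : φ tn < e₀ := by
    have : slope φ 0 tn = (φ tn - e₀) / tn := by rw [slope_def_field]; rw [hφ0]; ring
    rw [this] at hsn
    have := (lt_div_iff_of_neg htnneg).mp hsn
    nlinarith
  have hmaps : ∀ t ∈ Set.Icc tn tp, γ t ≠ 0 := by
    intro t ht
    apply hγne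
    rw [abs_lt]
    constructor
    · have : -T < tn := by rw [abs_lt] at hTn; exact hTn.1
      linarith [ht.1]
    · have : tp < T := by rw [abs_lt] at hTp; exact hTp.2
      linarith [ht.2]
  have hγcont : Continuous γ := by fun_prop
  have hφcont : ContinuousOn φ (Set.Icc tn tp) := by
    apply hs.continuousOn.comp hγcont.continuousOn
    intro t ht
    exact hmaps t ht
  have hIVT := intermediate_value_Ioo (le_of_lt (htnneg.trans htppos)) hφcont
  refine ⟨min (e₀ - φ tn) (φ tp - e₀), lt_min (by linarith) (by linarith), ?_⟩
  intro ω hω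
  have hω1 : φ tn < ω := by
    have := hω.1
    have h2 : min (e₀ - φ tn) (φ tp - e₀) ≤ e₀ - φ tn := min_le_left _ _
    linarith
  have hω2 : ω < φ tp := by
    have := hω.2
    have h2 : min (e₀ - φ tn) (φ tp - e₀) ≤ φ tp - e₀ := min_le_right _ _
    linarith
  obtain ⟨t, htmem, hφt⟩ := hIVT ⟨hω1, hω2⟩
  exact ⟨γ t, hmaps t (Set.mem_Icc_of_Ioo htmem), hφt⟩

/-- **Escape functions persist on nearby energy levels.** If `a` (positively homogeneous of
degree 2) is an escape function for `h` at the regular value `e₀`, i.e. `{h,a} ≥ δ > 0` on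
`h⁻¹(e₀) \ {0}`, then there is an open interval `I ∋ e₀` consisting of attained regular
values of `h` such that `{h,a} ≥ δ/2` on `h⁻¹(ω) \ {0}` for every `ω ∈ I`. -/
theorem escape_function_nearby_levels
    (h : E4 → ℝ)
    (hsmooth : ContDiffOn ℝ (⊤ : ℕ∞) h {(0 : E4)}ᶜ)
    (hhom : ∀ (lam : ℝ), 0 < lam → ∀ z : E4, z ≠ 0 → h (lam • z) = h z)
    (a : E4 → ℝ)
    (hasmooth : ContDiffOn ℝ (⊤ : ℕ∞) a {(0 : E4)}ᶜ)
    (hahom : ∀ (lam : ℝ), 0 < lam → ∀ z : E4, z ≠ 0 → a (lam • z) = lam ^ 2 • a z)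
    (e₀ : ℝ)
    (hval : ∃ z : E4, z ≠ 0 ∧ h z = e₀)
    (hregular : ∀ z : E4, z ≠ 0 → h z = e₀ → fderiv ℝ h z ≠ 0)
    (δ : ℝ) (hδ : 0 < δ)
    (hescape : ∀ z : E4, z ≠ 0 → h z = e₀ → δ ≤ pb h a z) :
    ∃ ε > 0,
      (∀ ω ∈ Set.Ioo (e₀ - ε) (e₀ + ε),
        (∃ z : E4, z ≠ 0 ∧ h z = ω) ∧
        (∀ z : E4, z ≠ 0 → h z = ω → fderiv ℝ h z ≠ 0)) ∧
      (∀ ω ∈ Set.Ioo (e₀ - ε) (e₀ + ε),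
        ∀ z : E4, z ≠ 0 → h z = ω → δ / 2 ≤ pb h a z) := by
  obtain ⟨z₀, hz₀, hz₀e⟩ := hval
  obtain ⟨ε₁, hε₁, hkey⟩ := sphere_part hsmooth hasmooth e₀ hregular hδ hescape
  obtain ⟨ε₂, hε₂, hex⟩ := ivt_part hsmooth hz₀ hz₀e (hregular z₀ hz₀ hz₀e)
  have hmin₁ : min ε₁ ε₂ ≤ ε₁ := min_le_left _ _
  have hmin₂ : min ε₁ ε₂ ≤ ε₂ := min_le_right _ _
  have main : ∀ ω ∈ Set.Ioo (e₀ - min ε₁ ε₂) (e₀ + min ε₁ ε₂), ∀ z : E4, z ≠ 0 → h z = ω →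
      (δ/2 < pb h a z ∧ fderiv ℝ h z ≠ 0) := by
    intro ω hω z hz hzω
    have hn : 0 < ‖z‖ := norm_pos_iff.mpr hz
    set w : E4 := ‖z‖⁻¹ • z with hwdef
    have hw0 : w ≠ 0 := smul_ne_zero (inv_ne_zero (ne_of_gt hn)) hz
    have hwnorm : ‖w‖ = 1 := by
      rw [hwdef, norm_smul, Real.norm_eq_abs, abs_of_pos (inv_pos.mpr hn)]
      field_simp
    have hwh : h w = ω := by rw [hwdef, hhom _ (inv_pos.mpr hn) z hz, hzω]
    have habs : |h w - e₀| < ε₁ := by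
      rw [hwh, abs_sub_lt_iff]
      constructor <;> [skip; skip] <;>
        · have h1 := hω.1; have h2 := hω.2; linarith
    obtain ⟨hpb, hfd⟩ := hkey w hwnorm habs
    have hz_eq : z = ‖z‖ • w := by
      rw [hwdef, smul_smul, mul_inv_cancel₀ (ne_of_gt hn), one_smul]
    constructor
    · rw [hz_eq, pb_homog hsmooth hasmooth hhom hahom hn hw0]
      exact hpb
    · rw [hz_eq]
      exact fderiv_ne_homog hsmooth hhom hn hw0 hfd
  refine ⟨min ε₁ ε₂, lt_min hε₁ hε₂, ?_, ?_⟩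
  · intro ω hω
    refine ⟨?_, fun z hz hzω => (main ω hω z hz hzω).2⟩
    apply hex
    exact ⟨by have := hω.1; linarith, by have := hω.2; linarith⟩
  · intro ω hω z hz hzω
    exact le_of_lt (main ω hω z hz hzω).1
end
end

section
/- Let Z be a compact smooth manifold, X a smooth vector field on Z with flow φᵗ (globally defined), and K⁺ ⊂ Z an attractor with open neighborhood U⁺ positively invariant and such that φᵗ(u) → K⁺ as t → ∞ for all u ∈ U⁺. Suppose z(t) ∈ ℝ⁴ solves ż = ρ(z)⁻² X(ζ(t)) in the ζ-component with ζ(t) = z(t)/|z(t)|, ρ(t) = |z(t)|, and z(t) is defined for all t ≥ 0 with ρ(t)² ≤ ρ(0)² + 2νt for some ν ≥ 0. If ζ(0) ∈ U⁺ then ζ(t) → K⁺ as t → ∞. -/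
noncomputable section

open Filter Metric

/-- **Attraction of the angular component.** Let `Z ⊂ ℝ⁴` be a compact manifold (here: a
compact invariant set), `X` a smooth vector field with globally defined flow `φ` on `Z`,
and `K⁺ ⊂ Z` an attractor with open neighbourhood `U⁺`, positively invariant and with
`φᵗ(u) → K⁺` as `t → ∞` for all `u ∈ U⁺`.  Suppose `z(t) ∈ ℝ⁴ \ {0}` is defined for all
`t ≥ 0`, its angular part `ζ(t) = z(t)/|z(t)|` lies in `Z` and solves
`ζ̇ = ρ(t)⁻² X(ζ)` with `ρ(t) = |z(t)|` satisfying `ρ(t)² ≤ ρ(0)² + 2νt` for some `ν ≥ 0`.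
If `ζ(0) ∈ U⁺`, then `ζ(t) → K⁺` as `t → ∞`. -/
theorem angular_component_attracted
    (Z : Set E4) (hZcompact : IsCompact Z)
    (X : E4 → E4) (hX : ContDiff ℝ (⊤ : ℕ∞) X)
    (φ : ℝ → E4 → E4)
    (hφZ : ∀ (t : ℝ), ∀ p ∈ Z, φ t p ∈ Z)
    (hφ0 : ∀ p : E4, φ 0 p = p)
    (hφadd : ∀ (s t : ℝ) (p : E4), φ (s + t) p = φ s (φ t p))
    (hφode : ∀ p ∈ Z, ∀ t : ℝ, HasDerivAt (fun s : ℝ => φ s p) (X (φ t p)) t)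
    (K U : Set E4) (hK : IsCompact K) (hKZ : K ⊆ Z) (hUopen : IsOpen U) (hKU : K ⊆ U)
    (hUinv : ∀ t : ℝ, 0 ≤ t → ∀ u ∈ U, φ t u ∈ U)
    (hattr : ∀ u ∈ U ∩ Z, Tendsto (fun t : ℝ => infDist (φ t u) K) atTop (nhds 0))
    (ν : ℝ) (hν : 0 ≤ ν)
    (z : ℝ → E4) (hzcont : Continuous z) (hzne : ∀ t : ℝ, z t ≠ 0)
    (hζZ : ∀ t : ℝ, 0 ≤ t → (‖z t‖⁻¹ • z t) ∈ Z)
    (hζode : ∀ t : ℝ, 0 ≤ t →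
      HasDerivAt (fun s : ℝ => ‖z s‖⁻¹ • z s)
        ((‖z t‖ ^ 2)⁻¹ • X (‖z t‖⁻¹ • z t)) t)
    (hgrowth : ∀ t : ℝ, 0 ≤ t → ‖z t‖ ^ 2 ≤ ‖z 0‖ ^ 2 + 2 * ν * t)
    (hinit : (‖z 0‖⁻¹ • z 0) ∈ U) :
    Tendsto (fun t : ℝ => infDist (‖z t‖⁻¹ • z t) K) atTop (nhds 0) := by
  -- notation
  set ζ : ℝ → E4 := fun t => ‖z t‖⁻¹ • z t with hζdef
  have hρpos : ∀ t : ℝ, 0 < ‖z t‖ ^ 2 := fun t => by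
    have := norm_pos_iff.2 (hzne t); positivity
  set c : ℝ → ℝ := fun t => (‖z t‖ ^ 2)⁻¹ with hcdef
  have hcpos : ∀ t, 0 < c t := fun t => inv_pos.2 (hρpos t)
  have hccont : Continuous c :=
    (hzcont.norm.pow 2).inv₀ fun t => (hρpos t).ne'
  set τ : ℝ → ℝ := fun u => ∫ s in (0:ℝ)..u, c s with hτdef
  have hτderiv : ∀ t : ℝ, HasDerivAt τ (c t) t := fun t =>
    intervalIntegral.integral_hasDerivAt_right (hccont.intervalIntegrable _ _)
      (hccont.stronglyMeasurableAtFilter _ _) hccont.continuousAt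
  have hτ0 : τ 0 = 0 := intervalIntegral.integral_same
  have hζ0Z : ζ 0 ∈ Z := hζZ 0 le_rfl
  have hζcont : Continuous ζ :=
    (hzcont.norm.inv₀ fun t => norm_ne_zero_iff.2 (hzne t)).smul hzcont
  -- the flow trajectory
  set g : ℝ → E4 := fun t => φ (τ t) (ζ 0) with hgdef
  have hgZ : ∀ t : ℝ, g t ∈ Z := fun t => hφZ _ _ hζ0Z
  have hgderiv : ∀ t : ℝ, HasDerivAt g (c t • X (g t)) t := fun t =>
    (hφode (ζ 0) hζ0Z (τ t)).scomp t (hτderiv t)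
  have hgcont : Continuous g := continuous_iff_continuousAt.2 fun t => (hgderiv t).continuousAt
  -- a big closed ball containing Z, on which X is Lipschitz
  obtain ⟨R, hZR⟩ := hZcompact.isBounded.subset_closedBall 0
  set B : Set E4 := closedBall 0 R with hBdef
  obtain ⟨C, hC⟩ := (isCompact_closedBall (0:E4) R).exists_bound_of_continuousOn
    ((hX.continuous_fderiv (by simp)).continuousOn (s := B))
  set L : NNReal := Real.toNNReal C with hLdef
  have hXlip : LipschitzOnWith L X B := by
    apply Convex.lipschitzOnWith_of_nnnorm_fderiv_le
      (fun x _ => (hX.differentiable (by simp)).differentiableAt)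
      (fun x hx => ?_) (convex_closedBall 0 R)
    · rw [← NNReal.coe_le_coe, coe_nnnorm, hLdef, Real.coe_toNNReal']
      exact le_max_of_le_left (hC x hx)
  -- key identity: the angular part follows the reparametrized flow
  have hkey : ∀ T : ℝ, 0 ≤ T → ζ T = g T := by
    intro T hT
    -- bound on c on [0, T]
    obtain ⟨t₀, ht₀mem, ht₀min⟩ := (isCompact_Icc : IsCompact (Set.Icc (0:ℝ) T)).exists_isMinOn
      (Set.nonempty_Icc.2 hT) ((hzcont.norm.pow 2).continuousOn)
    set m : ℝ := ‖z t₀‖ ^ 2 with hmdef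
    have hmpos : 0 < m := hρpos t₀
    have hcbound : ∀ t ∈ Set.Icc (0:ℝ) T, c t ≤ m⁻¹ := fun t ht =>
      (inv_le_inv₀ (hρpos t) hmpos).2 (ht₀min ht)
    -- time-dependent vector field and constraint set
    set Kc : NNReal := Real.toNNReal (m⁻¹) * L with hKcdef
    set v : ℝ → E4 → E4 := fun t x => c t • X x with hvdef
    set s : ℝ → Set E4 := fun t => if t ∈ Set.Icc (0:ℝ) T then B else ∅ with hsdef
    have hv : ∀ t, LipschitzOnWith Kc (v t) (s t) := by
      intro t
      by_cases ht : t ∈ Set.Icc (0:ℝ) T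
      · have hst : s t = B := if_pos ht
        rw [hst]
        intro x hx y hy
        have h1 : edist (v t x) (v t y) = ‖c t‖₊ * edist (X x) (X y) := by
          rw [hvdef]; simp only []; rw [edist_smul₀]; rfl
        rw [h1]
        calc (‖c t‖₊ : ENNReal) * edist (X x) (X y)
            ≤ ‖c t‖₊ * (L * edist x y) := by gcongr; exact hXlip hx hy
          _ = (‖c t‖₊ * L : NNReal) * edist x y := by push_cast; ring
          _ ≤ (Kc : ENNReal) * edist x y := by
              have hle : (‖c t‖₊ * L : NNReal) ≤ Kc := by
                rw [hKcdef]
                apply mul_le_mul_left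
                rw [← NNReal.coe_le_coe, coe_nnnorm,
                  Real.coe_toNNReal _ (le_of_lt (inv_pos.2 hmpos)),
                  Real.norm_eq_abs, abs_of_pos (hcpos t)]
                exact hcbound t ht
              exact mul_le_mul_left (ENNReal.coe_le_coe.2 hle) _
      · have hst : s t = ∅ := if_neg ht
        rw [hst]
        exact fun x hx => absurd hx (Set.notMem_empty x)
    have heq := ODE_solution_unique_of_mem_Icc_right (fun t _ => hv t)
      (f := ζ) (g := g) (a := 0) (b := T)
      (hζcont.continuousOn)
      (fun t ht => (hζode t ht.1).hasDerivWithinAt)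
      (fun t ht => by
        have : s t = B := if_pos ⟨ht.1, le_of_lt ht.2⟩
        rw [this]; exact hZR (hζZ t ht.1))
      (hgcont.continuousOn)
      (fun t ht => (hgderiv t).hasDerivWithinAt)
      (fun t ht => by
        have : s t = B := if_pos ⟨ht.1, le_of_lt ht.2⟩
        rw [this]; exact hZR (hgZ t))
      (by rw [hgdef]; simp only []; rw [hτ0, hφ0])
    exact heq ⟨hT, le_refl T⟩
  -- τ tends to infinity
  have hτtop : Tendsto τ atTop atTop := by
    set a : ℝ := ‖z 0‖ ^ 2 with hadef
    have hapos : 0 < a := hρpos 0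
    set μ : ℝ := ν + 1 with hμdef
    have hμpos : 0 < μ := by linarith
    set F : ℝ → ℝ := fun t => (2 * μ)⁻¹ * Real.log (a + 2 * μ * t) with hFdef
    have hdenpos : ∀ t : ℝ, 0 ≤ t → 0 < a + 2 * μ * t := fun t ht => by nlinarith
    have hFderiv : ∀ t : ℝ, 0 ≤ t → HasDerivAt F ((a + 2 * μ * t)⁻¹) t := by
      intro t ht
      have h1 : HasDerivAt (fun u : ℝ => a + 2 * μ * u) (2 * μ) t := by
        simpa using ((hasDerivAt_id t).const_mul (2 * μ)).const_add a
      have h2 := (Real.hasDerivAt_log (hdenpos t ht).ne').comp t h1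
      have h3 := h2.const_mul ((2 * μ)⁻¹)
      rw [show (2 * μ)⁻¹ * ((a + 2 * μ * t)⁻¹ * (2 * μ)) = (a + 2 * μ * t)⁻¹ by
        rw [mul_comm ((a + 2 * μ * t)⁻¹), ← mul_assoc, inv_mul_cancel₀ (by positivity), one_mul]] at h3
      exact h3
    have hlb : ∀ T : ℝ, 0 ≤ T → F T - F 0 ≤ τ T := by
      intro T hT
      have hint : ∫ s in (0:ℝ)..T, (a + 2 * μ * s)⁻¹ = F T - F 0 := by
        apply intervalIntegral.integral_eq_sub_of_hasDerivAt
        · intro t ht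
          rw [Set.uIcc_of_le hT] at ht
          exact hFderiv t ht.1
        · apply ContinuousOn.intervalIntegrable
          apply ContinuousOn.inv₀
          · fun_prop
          · intro t ht
            rw [Set.uIcc_of_le hT] at ht
            exact (hdenpos t ht.1).ne'
      rw [← hint, hτdef]
      simp only []
      apply intervalIntegral.integral_mono_on hT
      · apply ContinuousOn.intervalIntegrable
        apply ContinuousOn.inv₀
        · fun_prop
        · intro t ht
          rw [Set.uIcc_of_le hT] at ht
          exact (hdenpos t ht.1).ne'
      · exact hccont.intervalIntegrable _ _
      · intro t ht
        apply inv_anti₀ (hρpos t)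
        calc ‖z t‖ ^ 2 ≤ a + 2 * ν * t := hgrowth t ht.1
          _ ≤ a + 2 * μ * t := by nlinarith [ht.1]
    have hFtop : Tendsto (fun T => F T - F 0) atTop atTop := by
      apply Tendsto.atTop_add _ tendsto_const_nhds
      rw [hFdef]
      apply Tendsto.const_mul_atTop (by positivity : (0:ℝ) < (2 * μ)⁻¹)
      apply Real.tendsto_log_atTop.comp
      apply tendsto_atTop_add_const_left
      exact (tendsto_const_mul_atTop_of_pos (by positivity)).2 tendsto_id
    exact tendsto_atTop_mono' atTop
      (eventually_atTop.2 ⟨0, fun T hT => hlb T hT⟩) hFtop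
  -- conclude
  have hmain := (hattr (ζ 0) ⟨hinit, hζ0Z⟩).comp hτtop
  apply hmain.congr'
  filter_upwards [eventually_ge_atTop (0:ℝ)] with t ht
  simp only [Function.comp_apply]
  exact congrArg (fun p => infDist p K) (hkey t ht).symm
end
end
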